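/- Let H be a finite simple graph on r vertices, and for d ≥ r let φ(d) = ε(K_d − H) − ε(K_d), where K_d − H is the graph on [d] obtained from K_d by deleting the edges of H (H embedded on the first r vertices). Then φ(d+1) − φ(d) = ψ(H) − 2|E(H)| for all d ≥ r, where ψ(H) is the number of induced paths of length 2 in H. -/

import Mathlib

open Finset SimpleGraph

/-- A 4-cycle exists within the vertex set `s` of the graph `G`. -/
def fourCycleOn {V : Type*} (G : SimpleGraph V) (s : Set V) : Prop :=
  ∃ a b c d, a ∈ s ∧ b ∈ s ∧ c ∈ s ∧ d ∈ s ∧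
    a ≠ b ∧ a ≠ c ∧ a ≠ d ∧ b ≠ c ∧ b ≠ d ∧ c ≠ d ∧
    G.Adj a b ∧ G.Adj b c ∧ G.Adj c d ∧ G.Adj d a

/-- The pair of edges `{e,f}` spans an edge of the edge polytope: they share a
vertex, or they are disjoint and the induced subgraph on their endpoints has no 4-cycle. -/
def epPair {V : Type*} (G : SimpleGraph V) (e f : Sym2 V) : Prop :=
  (∃ v, v ∈ e ∧ v ∈ f) ∨
  ((¬ ∃ v, v ∈ e ∧ v ∈ f) ∧ ¬ fourCycleOn G {v | v ∈ e ∨ v ∈ f})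

open scoped Classical in
/-- The number of edges (1-dimensional faces) of the edge polytope of `G`:
the number of unordered pairs of distinct edges satisfying `epPair`. -/
noncomputable def epsilon {V : Type*} [Fintype V] (G : SimpleGraph V) : ℕ :=
  ((G.edgeFinset.powersetCard 2).filter
    (fun s => ∀ e ∈ s, ∀ f ∈ s, e ≠ f → epPair G e f)).card

open scoped Classical in
/-- number of 4-subsets inducing a path of length 3. -/
noncomputable def aCount {V : Type*} [Fintype V] (H : SimpleGraph V) : ℕ :=
  ((univ.powersetCard 4).filter (fun s => ∃ a b c d : V,
    s = {a, b, c, d} ∧ a ≠ b ∧ a ≠ c ∧ a ≠ d ∧ b ≠ c ∧ b ≠ d ∧ c ≠ d ∧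
    H.Adj a b ∧ H.Adj b c ∧ H.Adj c d ∧ ¬H.Adj a c ∧ ¬H.Adj a d ∧ ¬H.Adj b d)).card

open scoped Classical in
/-- number of 4-subsets inducing a cycle of length 4. -/
noncomputable def bCount {V : Type*} [Fintype V] (H : SimpleGraph V) : ℕ :=
  ((univ.powersetCard 4).filter (fun s => ∃ a b c d : V,
    s = {a, b, c, d} ∧ a ≠ b ∧ a ≠ c ∧ a ≠ d ∧ b ≠ c ∧ b ≠ d ∧ c ≠ d ∧
    H.Adj a b ∧ H.Adj b c ∧ H.Adj c d ∧ H.Adj d a ∧ ¬H.Adj a c ∧ ¬H.Adj b d)).card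

open scoped Classical in
/-- number of 4-subsets inducing a path of length 2 plus an isolated vertex. -/
noncomputable def cCount {V : Type*} [Fintype V] (H : SimpleGraph V) : ℕ :=
  ((univ.powersetCard 4).filter (fun s => ∃ a b c d : V,
    s = {a, b, c, d} ∧ a ≠ b ∧ a ≠ c ∧ a ≠ d ∧ b ≠ c ∧ b ≠ d ∧ c ≠ d ∧
    H.Adj a b ∧ H.Adj b c ∧ ¬H.Adj a c ∧ ¬H.Adj a d ∧ ¬H.Adj b d ∧ ¬H.Adj c d)).card

open scoped Classical in
/-- the number of triangles of `H`. -/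
noncomputable def k3 {V : Type*} [Fintype V] (H : SimpleGraph V) : ℕ :=
  ((univ.powersetCard 3).filter (fun s => ∀ i ∈ s, ∀ j ∈ s, i ≠ j → H.Adj i j)).card

open scoped Classical in
/-- the number of 3-subsets inducing a path with exactly two edges. -/
noncomputable def psi {V : Type*} [Fintype V] (H : SimpleGraph V) : ℕ :=
  ((univ.powersetCard 3).filter (fun s => ∃ a b c : V,
    s = {a, b, c} ∧ a ≠ b ∧ a ≠ c ∧ b ≠ c ∧ H.Adj a b ∧ H.Adj b c ∧ ¬H.Adj a c)).card

/-- the complete bipartite graph `K_{m,n}` on the vertex set `[d]`, with parts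
`{0,…,m-1}` and `{m,…,m+n-1}`. -/
def bip (d m n : ℕ) : SimpleGraph (Fin d) where
  Adj i j := ((i : ℕ) < m ∧ m ≤ (j : ℕ) ∧ (j : ℕ) < m + n) ∨
    ((j : ℕ) < m ∧ m ≤ (i : ℕ) ∧ (i : ℕ) < m + n)
  symm := ⟨by intro i j h; tauto⟩
  loopless := ⟨by intro i h; omega⟩

/-- the copy of `H` on the first `r` vertices of `[d]`. -/
def embedGraph {r : ℕ} (H : SimpleGraph (Fin r)) (d : ℕ) : SimpleGraph (Fin d) where
  Adj i j := ∃ (hi : (i : ℕ) < r) (hj : (j : ℕ) < r), H.Adj ⟨i, hi⟩ ⟨j, hj⟩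
  symm := ⟨by rintro i j ⟨hi, hj, h⟩; exact ⟨hj, hi, h.symm⟩⟩
  loopless := ⟨by rintro i ⟨hi, hj, h⟩; exact H.loopless.irrefl _ h⟩

/-- the subgraph of `H` consisting of the edges in the connected component `c`. -/
def compGraph {V : Type*} (H : SimpleGraph V) (c : H.ConnectedComponent) :
    SimpleGraph V where
  Adj i j := H.Adj i j ∧ H.connectedComponentMk i = c
  symm := ⟨by
    rintro i j ⟨h, hc⟩
    exact ⟨h.symm, (SimpleGraph.ConnectedComponent.sound h.symm.reachable).trans hc⟩⟩
  loopless := ⟨by rintro i ⟨h, _⟩; exact H.loopless.irrefl i h⟩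

open scoped Classical in
/-- `|X_{i,j}|`: the number of vertices (other than `i, j`) adjacent to `i` but not `j`. -/
noncomputable def cardX {V : Type*} [Fintype V] (H : SimpleGraph V) (i j : V) : ℕ :=
  (univ.filter (fun ℓ => ℓ ≠ i ∧ ℓ ≠ j ∧ H.Adj i ℓ ∧ ¬ H.Adj j ℓ)).card

/-!
Write `G_n = K_n − H`. The vertex `d` of `G_{d+1}` is an apex over `G_d`, so a pair of edges of
`G_{d+1}` either avoids it (`ε(G_d)` pairs), or consists of two apex edges (`C(d,2)` pairs, all
sharing the apex), or is an edge `ab` of `G_d` together with an apex edge `wd`. The last kind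
counts when `w ∈ {a, b}` (`2|E(G_d)|` pairs) and, for `w ∉ {a, b}`, exactly when there is no
4-cycle on `{a, b, w, d}`; as `d` is adjacent to `a, b, w`, such a cycle exists iff `w` is adjacent
to `a` or `b` in `G_d`. So these pairs are the induced paths `a w b` of `H`, counted once each by
their centre `w`. Hence `ε(G_{d+1}) = ε(G_d) + C(d,2) + 2|E(G_d)| + ψ(H)`, and comparing with
`H = ∅` through `|E(G_d)| = C(d,2) − |E(H)|` gives the theorem. The counting is done over ordered
pairs of edges, which doubles `ε`.
-/

section DoubleCounting

variable {α : Type*} [DecidableEq α] {R : α → α → Prop}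

lemma pairwise_pair_iff_of_symm (hR : ∀ x y, R x y → R y x) {x y : α} :
    (∀ a ∈ ({x, y} : Finset α), ∀ b ∈ ({x, y} : Finset α), a ≠ b → R a b) ↔ x = y ∨ R x y := by
  simp only [Finset.mem_insert, Finset.mem_singleton]
  constructor
  · intro h
    by_cases hxy : x = y
    · exact Or.inl hxy
    · exact Or.inr (h x (Or.inl rfl) y (Or.inr rfl) hxy)
  · rintro (rfl | h) a ha b hb hab
    · exact absurd ((ha.elim id id).trans (hb.elim id id).symm) hab
    · rcases ha with rfl | rfl <;> rcases hb with rfl | rfl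
      exacts [absurd rfl hab, h, hR _ _ h, absurd rfl hab]

variable [DecidableRel R]

lemma card_filter_mem_powersetCard_two (hR : ∀ x y, R x y → R y x) (s : Finset α) {x : α}
    (hx : x ∈ s) :
    #{t ∈ s.powersetCard 2 | (∀ a ∈ t, ∀ b ∈ t, a ≠ b → R a b) ∧ x ∈ t} =
      #{y ∈ s | y ≠ x ∧ R x y} := by
  symm
  refine Finset.card_nbij (fun y => {x, y}) ?_ ?_ ?_
  · intro y hy
    simp only [Finset.coe_filter, Set.mem_ofPred_eq] at hy ⊢
    refine ⟨Finset.mem_powersetCard.2 ⟨?_, Finset.card_pair (Ne.symm hy.2.1)⟩,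
      (pairwise_pair_iff_of_symm hR).2 (Or.inr hy.2.2), by simp⟩
    exact Finset.insert_subset hx (Finset.singleton_subset_iff.2 hy.1)
  · intro y hy z hz h
    simp only [Finset.coe_filter, Set.mem_ofPred_eq] at hy hz
    have : z ∈ ({x, y} : Finset α) := by simp only at h; rw [h]; simp
    simp only [Finset.mem_insert, Finset.mem_singleton] at this
    exact (this.resolve_left hz.2.1).symm
  · intro t ht
    simp only [Finset.coe_filter, Set.mem_ofPred_eq, Finset.mem_powersetCard] at ht
    obtain ⟨⟨hts, htc⟩, hR', hxt⟩ := ht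
    obtain ⟨a, b, hab, rfl⟩ := Finset.card_eq_two.1 htc
    simp only [Finset.mem_insert, Finset.mem_singleton] at hxt
    rcases hxt with rfl | rfl
    · refine ⟨b, ?_, rfl⟩
      simp only [Finset.coe_filter, Set.mem_ofPred_eq]
      exact ⟨hts (by simp), Ne.symm hab, ((pairwise_pair_iff_of_symm hR).1 hR').resolve_left hab⟩
    · refine ⟨a, ?_, Finset.pair_comm _ _⟩
      rw [Finset.pair_comm] at hR'
      simp only [Finset.coe_filter, Set.mem_ofPred_eq]
      exact ⟨hts (by simp), hab, ((pairwise_pair_iff_of_symm hR).1 hR').resolve_left (Ne.symm hab)⟩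

lemma two_mul_card_filter_powersetCard_two (hR : ∀ x y, R x y → R y x) (s : Finset α) :
    2 * #{t ∈ s.powersetCard 2 | ∀ x ∈ t, ∀ y ∈ t, x ≠ y → R x y} =
      ∑ x ∈ s, #{y ∈ s | y ≠ x ∧ R x y} := by
  set T := {t ∈ s.powersetCard 2 | ∀ x ∈ t, ∀ y ∈ t, x ≠ y → R x y}
  calc 2 * #T = ∑ t ∈ T, #{x ∈ s | x ∈ t} := by
        rw [Finset.sum_const_nat fun t ht => ?_, mul_comm]
        simp only [T, Finset.mem_filter, Finset.mem_powersetCard] at ht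
        rw [Finset.filter_mem_eq_inter, Finset.inter_eq_right.2 ht.1.1, ht.1.2]
    _ = ∑ x ∈ s, #{t ∈ T | x ∈ t} :=
        (Finset.sum_card_bipartiteAbove_eq_sum_card_bipartiteBelow _).symm
    _ = ∑ x ∈ s, #{y ∈ s | y ≠ x ∧ R x y} := by
        refine Finset.sum_congr rfl fun x hx => ?_
        rw [Finset.filter_filter, card_filter_mem_powersetCard_two hR s hx]

lemma sum_card_filter_union {A B : Finset α} (h : Disjoint A B) :
    ∑ x ∈ A ∪ B, #{y ∈ A ∪ B | R x y} =
      (∑ x ∈ A, #{y ∈ A | R x y} + ∑ x ∈ A, #{y ∈ B | R x y}) +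
        (∑ x ∈ B, #{y ∈ A | R x y} + ∑ x ∈ B, #{y ∈ B | R x y}) := by
  have hsplit : ∀ x, #{y ∈ A ∪ B | R x y} = #{y ∈ A | R x y} + #{y ∈ B | R x y} := fun x => by
    rw [Finset.filter_union, Finset.card_union_of_disjoint (Finset.disjoint_filter_filter h)]
  simp only [Finset.sum_union h, hsplit, Finset.sum_add_distrib]

end DoubleCounting

section EdgePairs

variable {V W : Type*} {G : SimpleGraph V} {G' : SimpleGraph W}

lemma epPair_comm {e f : Sym2 V} : epPair G e f ↔ epPair G f e := by
  simp only [epPair, fourCycleOn, Set.mem_ofPred_eq]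
  grind

lemma fourCycleOn_image (φ : G ↪g G') (s : Set V) :
    fourCycleOn G' (φ '' s) ↔ fourCycleOn G s := by
  constructor
  · rintro ⟨_, _, _, _, ⟨a, ha, rfl⟩, ⟨b, hb, rfl⟩, ⟨c, hc, rfl⟩, ⟨d, hd, rfl⟩, hab, hac, had,
      hbc, hbd, hcd, h₁, h₂, h₃, h₄⟩
    simp only [φ.injective.ne_iff, φ.map_adj_iff] at *
    exact ⟨a, b, c, d, ha, hb, hc, hd, hab, hac, had, hbc, hbd, hcd, h₁, h₂, h₃, h₄⟩
  · rintro ⟨a, b, c, d, ha, hb, hc, hd, hab, hac, had, hbc, hbd, hcd, h₁, h₂, h₃, h₄⟩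
    exact ⟨φ a, φ b, φ c, φ d, ⟨a, ha, rfl⟩, ⟨b, hb, rfl⟩, ⟨c, hc, rfl⟩, ⟨d, hd, rfl⟩,
      φ.injective.ne hab, φ.injective.ne hac, φ.injective.ne had, φ.injective.ne hbc,
      φ.injective.ne hbd, φ.injective.ne hcd, φ.map_adj_iff.2 h₁, φ.map_adj_iff.2 h₂,
      φ.map_adj_iff.2 h₃, φ.map_adj_iff.2 h₄⟩

lemma epPair_map (φ : G ↪g G') (e f : Sym2 V) :
    epPair G' (e.map φ) (f.map φ) ↔ epPair G e f := by
  have hshare : (∃ w, w ∈ e.map φ ∧ w ∈ f.map φ) ↔ ∃ u, u ∈ e ∧ u ∈ f := by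
    simp only [Sym2.mem_map]
    constructor
    · rintro ⟨_, ⟨u, hu, rfl⟩, ⟨u', hu', h⟩⟩
      exact ⟨u, hu, φ.injective h ▸ hu'⟩
    · rintro ⟨u, hu, hu'⟩
      exact ⟨φ u, ⟨u, hu, rfl⟩, ⟨u, hu', rfl⟩⟩
  have hends : {w | w ∈ e.map φ ∨ w ∈ f.map φ} = φ '' {u | u ∈ e ∨ u ∈ f} := by
    ext w
    simp only [Sym2.mem_map, Set.mem_ofPred_eq, Set.mem_image]
    grind
  rw [epPair, epPair, hshare, hends, fourCycleOn_image]

lemma exists_adj_adj_of_fourCycleOn {x : V} {t : Finset V} (ht : #t ≤ 3)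
    (h : fourCycleOn G (insert x ↑t)) :
    ∃ y ∈ t, ∃ z ∈ t, y ≠ z ∧ G.Adj x y ∧ G.Adj x z := by
  classical
  obtain ⟨a, b, c, d, ha, hb, hc, hd, hab, hac, had, hbc, hbd, hcd, h₁, h₂, h₃, h₄⟩ := h
  have mem : ∀ {y}, y ∈ insert x (t : Set V) → y ≠ x → y ∈ t := fun hy hyx =>
    (Set.mem_insert_iff.1 hy).resolve_left hyx
  by_cases hxa : x = a
  · subst hxa
    exact ⟨b, mem hb (Ne.symm hab), d, mem hd (Ne.symm had), hbd, h₁, h₄.symm⟩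
  by_cases hxb : x = b
  · subst hxb
    exact ⟨a, mem ha hab, c, mem hc (Ne.symm hbc), hac, h₁.symm, h₂⟩
  by_cases hxc : x = c
  · subst hxc
    exact ⟨b, mem hb hbc, d, mem hd (Ne.symm hcd), hbd, h₂.symm, h₃⟩
  by_cases hxd : x = d
  · subst hxd
    exact ⟨c, mem hc hcd, a, mem ha had, Ne.symm hac, h₃.symm, h₄⟩
  have hsub : ({a, b, c, d} : Finset V) ⊆ t := by
    simp only [Finset.insert_subset_iff, Finset.singleton_subset_iff]
    exact ⟨mem ha (Ne.symm hxa), mem hb (Ne.symm hxb), mem hc (Ne.symm hxc),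
      mem hd (Ne.symm hxd)⟩
  have hcard : #({a, b, c, d} : Finset V) = 4 := by
    rw [Finset.card_insert_of_notMem (by simp [hab, hac, had]),
      Finset.card_insert_of_notMem (by simp [hbc, hbd]), Finset.card_pair hcd]
  have := Finset.card_le_card hsub
  omega

open scoped Classical in
lemma two_mul_epsilon [Fintype V] (G : SimpleGraph V) :
    2 * epsilon G = ∑ e ∈ G.edgeFinset, #{f ∈ G.edgeFinset | f ≠ e ∧ epPair G e f} := by
  rw [epsilon, ← two_mul_card_filter_powersetCard_two (fun _ _ => epPair_comm.1)]
  congr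

end EdgePairs

section InducedPaths

open scoped Classical

variable {V : Type*}

/-- The centre of an induced path of `Gᶜ` is determined by its vertex set. -/
lemma eq_of_insert_toFinset_eq {G : SimpleGraph V} {e₁ e₂ : Sym2 V} {w₁ w₂ : V}
    (he₁ : e₁ ∈ G.edgeSet) (hw₂ : ∀ x ∈ e₂, Gᶜ.Adj w₂ x)
    (h : insert w₁ e₁.toFinset = insert w₂ e₂.toFinset) : w₁ = w₂ := by
  by_contra hne
  have hw₂e₁ : w₂ ∈ e₁ := by
    have : w₂ ∈ insert w₁ e₁.toFinset := h ▸ Finset.mem_insert_self _ _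
    simpa [Ne.symm hne] using this
  obtain ⟨y, rfl⟩ := Sym2.mem_iff_exists.1 hw₂e₁
  have hy : G.Adj w₂ y := he₁
  have hye₂ : y ∈ e₂ := by
    have : y ∈ insert w₂ e₂.toFinset := h ▸ by simp
    simpa [hy.ne.symm] using this
  exact ((G.compl_adj _ _).1 (hw₂ y hye₂)).2 hy

variable [Fintype V] {K : SimpleGraph V}

lemma mem_psi_filter_iff {t : Finset V} :
    t ∈ (univ.powersetCard 3).filter (fun s => ∃ a b c : V,
      s = {a, b, c} ∧ a ≠ b ∧ a ≠ c ∧ b ≠ c ∧ K.Adj a b ∧ K.Adj b c ∧ ¬K.Adj a c) ↔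
    ∃ a b c : V, t = {a, b, c} ∧ a ≠ c ∧ K.Adj a b ∧ K.Adj b c ∧ ¬K.Adj a c := by
  simp only [Finset.mem_filter, Finset.mem_powersetCard, Finset.subset_univ, true_and]
  constructor
  · rintro ⟨-, a, b, c, rfl, -, hac, -, h⟩
    exact ⟨a, b, c, rfl, hac, h⟩
  · rintro ⟨a, b, c, rfl, hac, hab, hbc, hnac⟩
    refine ⟨?_, a, b, c, rfl, hab.ne, hac, hbc.ne, hab, hbc, hnac⟩
    rw [Finset.card_insert_of_notMem (by simp [hab.ne, hac]), Finset.card_pair hbc.ne]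

lemma psi_compl_eq_sum_card_commonNeighbors (G : SimpleGraph V) :
    psi Gᶜ = ∑ e ∈ G.edgeFinset, #{w | ∀ x ∈ e, Gᶜ.Adj w x} := by
  rw [← Finset.card_sigma]
  symm
  refine Finset.card_bij (fun p _ => insert p.2 p.1.toFinset) ?_ ?_ ?_
  · rintro ⟨e, w⟩ hp
    simp only [Finset.mem_sigma, SimpleGraph.mem_edgeFinset, Finset.mem_filter,
      Finset.mem_univ, true_and] at hp
    obtain ⟨he, hw⟩ := hp
    induction e using Sym2.ind with
    | _ a c =>
    have hac : G.Adj a c := he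
    rw [mem_psi_filter_iff]
    refine ⟨a, w, c, ?_, hac.ne, (hw a (by simp)).symm, hw c (by simp), fun h => h.2 hac⟩
    rw [Sym2.toFinset_mk_eq, Finset.insert_comm]
  · rintro ⟨e₁, w₁⟩ hp₁ ⟨e₂, w₂⟩ hp₂ h
    simp only [Finset.mem_sigma, SimpleGraph.mem_edgeFinset, Finset.mem_filter,
      Finset.mem_univ, true_and] at hp₁ hp₂ h
    obtain rfl := eq_of_insert_toFinset_eq hp₁.1 hp₂.2 h
    suffices e₁ = e₂ by rw [this]
    ext x
    have hx := congrArg (x ∈ ·) h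
    simp only [Finset.mem_insert, Sym2.mem_toFinset, eq_iff_iff] at hx
    constructor
    · intro hx₁
      exact (hx.1 (Or.inr hx₁)).resolve_left (hp₁.2 x hx₁).ne.symm
    · intro hx₂
      exact (hx.2 (Or.inr hx₂)).resolve_left (hp₂.2 x hx₂).ne.symm
  · intro t ht
    rw [mem_psi_filter_iff] at ht
    obtain ⟨a, b, c, rfl, hac, hab, hbc, hnac⟩ := ht
    refine ⟨⟨s(a, c), b⟩, ?_, ?_⟩
    · simp only [Finset.mem_sigma, SimpleGraph.mem_edgeFinset, SimpleGraph.mem_edgeSet,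
        Finset.mem_filter, Finset.mem_univ, true_and, Sym2.mem_iff]
      refine ⟨?_, by rintro x (rfl | rfl); exacts [hab.symm, hbc]⟩
      simpa [hac] using hnac
    · simp only [Sym2.toFinset_mk_eq, Finset.insert_comm]

lemma psi_map {W : Type*} [Fintype W] (f : V ↪ W) (K : SimpleGraph V) :
    psi (K.map f) = psi K := by
  symm
  refine Finset.card_bij (fun t _ => t.map f) ?_ (fun _ _ _ _ h => Finset.map_injective f h) ?_
  · intro t ht
    rw [mem_psi_filter_iff] at ht ⊢
    obtain ⟨a, b, c, rfl, hac, hab, hbc, hnac⟩ := ht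
    refine ⟨f a, f b, f c, by simp, f.injective.ne hac, ?_, ?_, ?_⟩ <;>
      simpa only [SimpleGraph.map_adj_apply]
  · intro t ht
    rw [mem_psi_filter_iff] at ht
    obtain ⟨a', b', c', rfl, hac, hab', hbc', hnac⟩ := ht
    obtain ⟨a, b₀, hab, rfl, rfl⟩ := (SimpleGraph.map_adj _ _ _ _).1 hab'
    obtain ⟨b, c, hbc, hb, rfl⟩ := (SimpleGraph.map_adj _ _ _ _).1 hbc'
    obtain rfl := f.injective hb
    refine ⟨{a, b, c}, ?_, by simp⟩
    rw [mem_psi_filter_iff]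
    exact ⟨a, b, c, rfl, fun h => hac (congrArg f h), hab, hbc,
      fun h => hnac (SimpleGraph.map_adj_apply.2 h)⟩

lemma psi_bot : psi (⊥ : SimpleGraph V) = 0 := by
  simp [psi]

end InducedPaths

section Apex

variable {V W : Type*} {G : SimpleGraph V} {G' : SimpleGraph W} (φ : G ↪g G') {v : W}

lemma ne_of_range_eq_compl (hrange : Set.range φ = {v}ᶜ) (u : V) : φ u ≠ v := by
  have : φ u ∈ Set.range φ := ⟨u, rfl⟩
  simpa [hrange] using this

lemma map_ne_apex (hφv : ∀ u, φ u ≠ v) (e : Sym2 V) (u : V) : e.map φ ≠ s(v, φ u) := fun h => by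
  obtain ⟨x, -, hx⟩ := Sym2.mem_map.1 (h ▸ Sym2.mem_mk_left v (φ u))
  exact hφv x hx

lemma apex_edge_injective : Function.Injective fun u => s(v, φ u) := fun _ _ h =>
  φ.injective (Sym2.congr_right.1 h)

variable (hφv : ∀ u, φ u ≠ v) (hv : ∀ u, G'.Adj v (φ u))

include hφv hv in
lemma fourCycleOn_apex_iff {a b w : V} (hab : G.Adj a b) (hwa : w ≠ a) (hwb : w ≠ b) :
    fourCycleOn G' {y | y ∈ s(φ a, φ b) ∨ y ∈ s(v, φ w)} ↔ G.Adj w a ∨ G.Adj w b := by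
  classical
  have hS : {y | y ∈ s(φ a, φ b) ∨ y ∈ s(v, φ w)} = insert (φ w) ↑({φ a, φ b, v} : Finset W) := by
    ext y
    simp only [Sym2.mem_iff, Set.mem_ofPred_eq, Finset.coe_insert, Finset.coe_singleton,
      Set.mem_insert_iff, Set.mem_singleton_iff]
    tauto
  constructor
  · rw [hS]
    intro h
    obtain ⟨y, hy, z, hz, hyz, hwy, hwz⟩ :=
      exists_adj_adj_of_fourCycleOn Finset.card_le_three h
    have key : ∀ y ∈ ({φ a, φ b, v} : Finset W), y ≠ v → G'.Adj (φ w) y →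
        G.Adj w a ∨ G.Adj w b := by
      intro y hy hyv hadj
      simp only [Finset.mem_insert, Finset.mem_singleton] at hy
      rcases hy with rfl | rfl | rfl
      · exact Or.inl (φ.map_adj_iff.1 hadj)
      · exact Or.inr (φ.map_adj_iff.1 hadj)
      · exact absurd rfl hyv
    by_cases hyv : y = v
    · exact key z hz (hyv ▸ Ne.symm hyz) hwz
    · exact key y hy hyv hwy
  · have hne : ∀ {x y}, x ≠ y → φ x ≠ φ y := φ.injective.ne
    rintro (h | h)
    · exact ⟨φ a, φ b, v, φ w, by simp, by simp, by simp, by simp, hne hab.ne, hφv a,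
        hne (Ne.symm hwa), hφv b, hne (Ne.symm hwb), Ne.symm (hφv w), φ.map_adj_iff.2 hab,
        (hv b).symm, hv w, φ.map_adj_iff.2 h⟩
    · exact ⟨φ b, φ a, v, φ w, by simp, by simp, by simp, by simp, hne hab.ne.symm, hφv b,
        hne (Ne.symm hwb), hφv a, hne (Ne.symm hwa), Ne.symm (hφv w), φ.map_adj_iff.2 hab.symm,
        (hv a).symm, hv w, φ.map_adj_iff.2 h⟩

include hφv hv in
lemma epPair_map_apex_iff {e : Sym2 V} (he : e ∈ G.edgeSet) (w : V) :
    epPair G' (e.map φ) s(v, φ w) ↔ w ∈ e ∨ ∀ x ∈ e, Gᶜ.Adj w x := by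
  induction e using Sym2.ind with
  | _ a b =>
  rw [SimpleGraph.mem_edgeSet] at he
  simp only [Sym2.map_mk, Sym2.mem_iff, SimpleGraph.compl_adj, forall_eq_or_imp, forall_eq]
  by_cases hw : w = a ∨ w = b
  · refine iff_of_true (Or.inl ⟨φ w, ?_, Sym2.mem_mk_right _ _⟩) (Or.inl hw)
    rcases hw with rfl | rfl <;> simp
  have hwa : w ≠ a := fun h => hw (Or.inl h)
  have hwb : w ≠ b := fun h => hw (Or.inr h)
  have hdisj : ¬ ∃ y, y ∈ s(φ a, φ b) ∧ y ∈ s(v, φ w) := by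
    simp only [Sym2.mem_iff]
    rintro ⟨y, rfl | rfl, h | h⟩
    exacts [hφv a h, hwa (φ.injective h).symm, hφv b h, hwb (φ.injective h).symm]
  rw [epPair, fourCycleOn_apex_iff φ hφv hv he hwa hwb]
  simp only [hdisj, hwa, hwb, not_or, false_or, true_and, ne_eq, not_false_eq_true]

open scoped Classical

variable [Fintype V]

include hφv hv in
lemma card_filter_epPair_map_apex {e : Sym2 V} (he : e ∈ G.edgeSet) :
    #{w | epPair G' (e.map φ) s(v, φ w)} = 2 + #{w | ∀ x ∈ e, Gᶜ.Adj w x} := by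
  rw [Finset.filter_congr fun w _ => epPair_map_apex_iff φ hφv hv he w, Finset.filter_or,
    Finset.card_union_of_disjoint]
  · congr
    rw [← Sym2.card_toFinset_of_not_isDiag e (G.not_isDiag_of_mem_edgeSet he)]
    congr
    ext w
    simp
  · refine Finset.disjoint_filter.2 fun w _ hw h => ?_
    exact (Gᶜ.loopless.irrefl w) (h w hw)

include hφv in
lemma disjoint_image_map_image_apex :
    Disjoint (G.edgeFinset.image (Sym2.map φ)) (univ.image (fun u => s(v, φ u))) := by
  simp only [Finset.disjoint_left, Finset.mem_image, Finset.mem_univ, true_and, not_exists]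
  rintro _ ⟨e, -, rfl⟩ u
  exact (map_ne_apex φ hφv e u).symm

lemma sum_card_filter_epPair_map :
    ∑ e ∈ G.edgeFinset.image (Sym2.map φ),
      #{f ∈ G.edgeFinset.image (Sym2.map φ) | f ≠ e ∧ epPair G' e f} = 2 * epsilon G := by
  have hinj : Function.Injective (Sym2.map φ) := Sym2.map.injective φ.injective
  rw [two_mul_epsilon, Finset.sum_image hinj.injOn]
  refine Finset.sum_congr rfl fun e _ => ?_
  rw [Finset.filter_image, Finset.card_image_of_injective _ hinj]
  simp only [hinj.ne_iff, epPair_map]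

include hφv hv in
lemma sum_card_filter_epPair_map_apex :
    ∑ e ∈ G.edgeFinset.image (Sym2.map φ),
      #{f ∈ univ.image (fun u => s(v, φ u)) | f ≠ e ∧ epPair G' e f} =
        2 * #G.edgeFinset + psi Gᶜ := by
  rw [Finset.sum_image (Sym2.map.injective φ.injective).injOn,
    psi_compl_eq_sum_card_commonNeighbors, mul_comm, ← smul_eq_mul, ← Finset.sum_const,
    ← Finset.sum_add_distrib]
  refine Finset.sum_congr rfl fun e he => ?_
  rw [Finset.filter_image, Finset.card_image_of_injective _ (apex_edge_injective φ),
    ← card_filter_epPair_map_apex φ hφv hv (G.mem_edgeFinset.1 he)]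
  simp only [ne_eq, (map_ne_apex φ hφv e _).symm, not_false_eq_true, true_and]

lemma sum_card_filter_epPair_apex :
    ∑ e ∈ univ.image (fun u => s(v, φ u)),
      #{f ∈ univ.image (fun u => s(v, φ u)) | f ≠ e ∧ epPair G' e f} =
        2 * (Fintype.card V).choose 2 := by
  have hinj := apex_edge_injective φ (v := v)
  have hshare : ∀ u w, epPair G' s(v, φ u) s(v, φ w) := fun u w =>
    Or.inl ⟨v, Sym2.mem_mk_left _ _, Sym2.mem_mk_left _ _⟩
  rw [Finset.sum_image hinj.injOn, Nat.choose_two_right,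
    Nat.mul_div_cancel' (Nat.even_mul_pred_self _).two_dvd, ← Finset.card_univ,
    ← smul_eq_mul, ← Finset.sum_const]
  refine Finset.sum_congr rfl fun u _ => ?_
  rw [Finset.filter_image, Finset.card_image_of_injective _ hinj]
  simp only [hinj.ne_iff, hshare, and_true, Finset.filter_ne',
    Finset.card_erase_of_mem (Finset.mem_univ _)]

variable [Fintype W]

include hv in
lemma edgeFinset_eq_of_range_eq_compl (hrange : Set.range φ = {v}ᶜ) :
    G'.edgeFinset = G.edgeFinset.image (Sym2.map φ) ∪ univ.image (fun u => s(v, φ u)) := by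
  have hcover : ∀ w, w ≠ v → ∃ u, φ u = w := fun w hw => by
    simpa [← Set.mem_range, hrange] using hw
  ext e
  induction e using Sym2.ind with
  | _ x y =>
  simp only [Finset.mem_union, Finset.mem_image, SimpleGraph.mem_edgeFinset,
    SimpleGraph.mem_edgeSet, Finset.mem_univ, true_and]
  constructor
  · intro hxy
    by_cases hx : x = v
    · obtain ⟨u, rfl⟩ := hcover y (hx ▸ hxy.ne.symm)
      exact Or.inr ⟨u, by rw [hx]⟩
    by_cases hy : y = v
    · obtain ⟨u, rfl⟩ := hcover x hx
      exact Or.inr ⟨u, by rw [hy, Sym2.eq_swap]⟩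
    obtain ⟨a, rfl⟩ := hcover x hx
    obtain ⟨b, rfl⟩ := hcover y hy
    exact Or.inl ⟨s(a, b), φ.map_adj_iff.1 hxy, rfl⟩
  · rintro (⟨e, he, hxy⟩ | ⟨u, hu⟩)
    · induction e using Sym2.ind with
      | _ a b =>
      rw [← SimpleGraph.mem_edgeSet, ← hxy, Sym2.map_mk, SimpleGraph.mem_edgeSet]
      exact φ.map_adj_iff.2 he
    · rw [← SimpleGraph.mem_edgeSet, ← hu, SimpleGraph.mem_edgeSet]
      exact hv u

include hv in
theorem epsilon_eq_of_range_eq_compl (hrange : Set.range φ = {v}ᶜ) :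
    epsilon G' = epsilon G + (Fintype.card V).choose 2 + 2 * #G.edgeFinset + psi Gᶜ := by
  have hφv := ne_of_range_eq_compl φ hrange
  have hswap : ∑ e ∈ univ.image (fun u => s(v, φ u)),
      #{f ∈ G.edgeFinset.image (Sym2.map φ) | f ≠ e ∧ epPair G' e f} =
        ∑ e ∈ G.edgeFinset.image (Sym2.map φ),
          #{f ∈ univ.image (fun u => s(v, φ u)) | f ≠ e ∧ epPair G' e f} := by
    refine (Finset.sum_card_bipartiteAbove_eq_sum_card_bipartiteBelow _).trans
      (Finset.sum_congr rfl fun e _ => ?_)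
    simp only [Finset.bipartiteBelow, ne_comm (a := e), epPair_comm (e := e)]
  have h := two_mul_epsilon G'
  rw [edgeFinset_eq_of_range_eq_compl φ hv hrange,
    sum_card_filter_union (disjoint_image_map_image_apex φ hφv), hswap,
    sum_card_filter_epPair_map, sum_card_filter_epPair_map_apex φ hφv hv,
    sum_card_filter_epPair_apex] at h
  omega

end Apex

section EmbeddedGraph

open scoped Classical

variable {r : ℕ} (H : SimpleGraph (Fin r))

lemma embedGraph_eq_map {d : ℕ} (hd : r ≤ d) : embedGraph H d = H.map (Fin.castLEEmb hd) := by
  ext i j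
  simp only [embedGraph, SimpleGraph.map_adj, Fin.castLEEmb_apply]
  constructor
  · rintro ⟨hi, hj, h⟩
    exact ⟨_, _, h, rfl, rfl⟩
  · rintro ⟨a, b, h, rfl, rfl⟩
    exact ⟨a.isLt, b.isLt, h⟩

lemma embedGraph_bot (d : ℕ) : embedGraph (⊥ : SimpleGraph (Fin r)) d = ⊥ := by
  ext i j
  simp [embedGraph]

def castSuccEmbedding (d : ℕ) : ⊤ \ embedGraph H d ↪g ⊤ \ embedGraph H (d + 1) where
  toEmbedding := Fin.castSuccEmb
  map_rel_iff' := by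
    intro i j
    simp [embedGraph]

variable [Fintype H.edgeSet]

lemma card_edgeFinset_embedGraph {d : ℕ} (hd : r ≤ d) :
    #(embedGraph H d).edgeFinset = #H.edgeFinset := by
  rw [embedGraph_eq_map H hd]
  convert SimpleGraph.card_edgeFinset_map (Fin.castLEEmb hd) H

lemma card_edgeFinset_sdiff_embedGraph_add {d : ℕ} (hd : r ≤ d) :
    #(⊤ \ embedGraph H d).edgeFinset + #H.edgeFinset = d.choose 2 := by
  rw [SimpleGraph.edgeFinset_sdiff, Finset.card_sdiff_of_subset
      (SimpleGraph.edgeFinset_mono le_top), ← card_edgeFinset_embedGraph H hd,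
    Nat.sub_add_cancel (Finset.card_le_card (SimpleGraph.edgeFinset_mono le_top)),
    SimpleGraph.card_edgeFinset_top_eq_card_choose_two, Fintype.card_fin]

theorem epsilon_sdiff_embedGraph_succ {d : ℕ} (hd : r ≤ d) :
    epsilon (⊤ \ embedGraph H (d + 1)) + 2 * #H.edgeFinset =
      epsilon (⊤ \ embedGraph H d) + 3 * d.choose 2 + psi H := by
  have hrange : Set.range (castSuccEmbedding H d) = {Fin.last d}ᶜ := by
    ext i
    simp [castSuccEmbedding, ← Fin.lt_last_iff_ne_last, Fin.lt_def]
  have hv : ∀ u, (⊤ \ embedGraph H (d + 1)).Adj (Fin.last d) (castSuccEmbedding H d u) := by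
    intro u
    refine ⟨(Fin.castSucc_ne_last u).symm, ?_⟩
    rintro ⟨hlast, -⟩
    rw [Fin.val_last] at hlast
    omega
  have hψ : psi (⊤ \ embedGraph H d)ᶜ = psi H := by
    rw [top_sdiff, compl_compl, embedGraph_eq_map H hd, psi_map]
  have hE := card_edgeFinset_sdiff_embedGraph_add H hd
  have hstep : epsilon (⊤ \ embedGraph H (d + 1)) = epsilon (⊤ \ embedGraph H d) + d.choose 2 +
      2 * #(⊤ \ embedGraph H d).edgeFinset + psi H := by
    have := epsilon_eq_of_range_eq_compl _ hv hrange
    rw [hψ, Fintype.card_fin] at this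
    convert this
  omega

end EmbeddedGraph

open scoped Classical in
theorem phi_succ_sub_phi (r : ℕ) (H : SimpleGraph (Fin r)) (d : ℕ) (hd : r ≤ d) :
    (((epsilon ((⊤ : SimpleGraph (Fin (d + 1))) \ embedGraph H (d + 1)) : ℤ)
        - (epsilon (⊤ : SimpleGraph (Fin (d + 1))) : ℤ))
      - ((epsilon ((⊤ : SimpleGraph (Fin d)) \ embedGraph H d) : ℤ)
        - (epsilon (⊤ : SimpleGraph (Fin d)) : ℤ)))
    = (psi H : ℤ) - 2 * (H.edgeFinset.card : ℤ) := by
  have hH := epsilon_sdiff_embedGraph_succ H hd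
  have hK := epsilon_sdiff_embedGraph_succ (⊥ : SimpleGraph (Fin r)) hd
  simp only [embedGraph_bot, sdiff_bot, psi_bot, SimpleGraph.edgeFinset_bot, Finset.card_empty]
    at hK
  omega
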